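/- For nonnegative integers n1, n2, a, b, with n = n1+n2: Σ_{i,j≥0} q^{(n1−a)i+(n2−b)j−ij+i²+j²} · [n1 choose a−i]_q [n2 choose b−j]_q [n1+n2 choose n1+i−j]_q [n1+i choose n1]_q [n2+j choose n2]_q = [n choose n1]_q · Σ_{i≥0} q^{(n−a−b)i+i²} · [n+i choose i]_q [n choose a−i]_q [n choose b−i]_q. -/

import Mathlib

open scoped BigOperators

namespace DyckTilings

/-- In the step word of a lattice path, `false` is a down step `(1,0)` and
`true` is an up step `(0,1)`.  `pathX w x0 c` is the x-coordinate of the point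
of the path (started at a point with x-coordinate `x0` on the diagonal
`x + y = 0`) lying on the diagonal `x + y = c`, i.e. the point reached after
`c` steps. -/
def pathX (w : List Bool) (x0 : ℤ) (c : ℤ) : ℤ :=
  x0 + ((w.take c.toNat).count false : ℤ)

/-- `w` is (the step word of) a Dyck path of length `2 * n`: a lattice path
from `(0,0)` to `(n,n)` never going below the line `y = x`. -/
def IsDyckWord (n : ℕ) (w : List Bool) : Prop :=
  w.length = 2 * n ∧ w.count false = n ∧
    ∀ c : ℤ, 0 ≤ c → c ≤ 2 * n → 2 * pathX w 0 c ≤ c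

/-- the Dyck path `Δ_k`: `k` up steps followed by `k` down steps -/
def delta (k : ℕ) : List Bool :=
  List.replicate k true ++ List.replicate k false

/-- `Δ_{N 0, N 1, …, N (k-1)} = Δ_{N 0} * ⋯ * Δ_{N (k-1)}` (concatenation of
Dyck paths is concatenation of their step words) -/
def deltaComp (N : ℕ → ℕ) (k : ℕ) : List Bool :=
  ((List.range k).map fun i => delta (N i)).flatten

/-- the q-integer `[m]_q = 1 + q + ⋯ + q^(m-1)` -/
def qint {K : Type*} [CommRing K] (q : K) (m : ℕ) : K :=
  ∑ i ∈ Finset.range m, q ^ i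

/-- the q-factorial `[m]_q! = [1]_q [2]_q ⋯ [m]_q` -/
def qfact {K : Type*} [CommRing K] (q : K) (m : ℕ) : K :=
  ∏ i ∈ Finset.range m, qint q (i + 1)

/-- the q-binomial coefficient `[m choose j]_q`, equal to `0` when `j < 0` or
`j > m` -/
noncomputable def qbinom {K : Type*} [Field K] (q : K) (m : ℕ) (j : ℤ) : K :=
  if 0 ≤ j ∧ j ≤ m then qfact q m / (qfact q j.toNat * qfact q (m - j.toNat)) else 0

/-- the height (value of `y - x`) of the point of the path `w` (started on the
main diagonal) lying on the diagonal `x + y = c` -/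
def heightAt (w : List Bool) (c : ℕ) : ℤ :=
  (c : ℤ) - 2 * pathX w 0 (c : ℤ)

/-- the indices of the up steps of `w`; each chord of `w` consists of an up
step and its matching down step, so chords are indexed by `upSteps w` -/
def upSteps (w : List Bool) : Finset ℕ :=
  (Finset.range w.length).filter fun i => w.getD i false = true

/-- the index of the down step matched with the up step at index `i` -/
noncomputable def matchIdx (w : List Bool) (i : ℕ) : ℕ :=
  sInf {j : ℕ | i < j ∧ heightAt w (j + 1) = heightAt w i}

/-- the length `|c|` of the chord of the up step at index `i`: the difference
of the x-coordinates of the starting point of the up step and the ending point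
of the matching down step -/
noncomputable def chordLen (w : List Bool) (i : ℕ) : ℕ :=
  (pathX w 0 ((matchIdx w i : ℤ) + 1) - pathX w 0 (i : ℤ)).toNat

/-- the height `ht(c)` of the chord of the up step at index `i`: the chord lies
between the lines `y = x + ht(c) - 1` and `y = x + ht(c)` -/
def chordHt (w : List Bool) (i : ℕ) : ℕ := (heightAt w (i + 1)).toNat

/-- `ht(μ) = Σ_{c ∈ C(μ)} (ht(c) - 1)` -/
def htSum (w : List Bool) : ℕ := ∑ i ∈ upSteps w, (chordHt w i - 1)

/-! ### Skew shapes and (full) cover-inclusive Dyck tilings -/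

/-- The set of cells of the skew shape `lam/mu`, for Dyck paths `lam` and `mu`
with `mu` weakly above `lam`; the cell `(x,y)` is the unit square
`[x,x+1] × [y,y+1]`, and it belongs to `lam/mu` exactly when, on the diagonal
`x + y + 1` through its center, `mu` passes weakly to its left and `lam`
weakly to its right. -/
def skewCells (lam mu : List Bool) : Set (ℤ × ℤ) :=
  {c | pathX mu 0 (c.1 + c.2 + 1) ≤ c.1 ∧ c.1 + 1 ≤ pathX lam 0 (c.1 + c.2 + 1)}

/-- the number of cells `|λ/μ|` of the skew shape -/
noncomputable def ncells (lam mu : List Bool) : ℕ := (skewCells lam mu).ncard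

/-- the cells of a ribbon starting at the cell `p`, with `true` = north step
and `false` = east step -/
def cellsOf : List Bool → ℤ × ℤ → List (ℤ × ℤ)
  | [], p => [p]
  | s :: rest, p => p :: cellsOf rest (if s then (p.1, p.2 + 1) else (p.1 + 1, p.2))

/-- A Dyck tile: a ribbon whose sequence of cells, read from southwest to
northeast, follows a Dyck word (equivalently, the centers of its cells form a
Dyck path). -/
def IsDyckTile (s : Set (ℤ × ℤ)) : Prop :=
  ∃ (x0 y0 : ℤ) (k : ℕ) (u : List Bool), IsDyckWord k u ∧
    s = {c | c ∈ cellsOf u (x0, y0)}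

/-- southeast translation by `(k, -k)` -/
def shiftSE (k : ℤ) (s : Set (ℤ × ℤ)) : Set (ℤ × ℤ) :=
  (fun c => (c.1 + k, c.2 - k)) '' s

/-- cover-inclusiveness: if a tile `η₁` has a cell to the southeast of a cell
of a tile `η₂`, then that southeast translation of `η₂` is contained in `η₁` -/
def IsCoverInclusive (T : Set (Set (ℤ × ℤ))) : Prop :=
  ∀ η₁ ∈ T, ∀ η₂ ∈ T, ∀ c ∈ η₂, ∀ k : ℤ, 1 ≤ k →
    (c.1 + k, c.2 - k) ∈ η₁ → shiftSE k η₂ ⊆ η₁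

/-- `T` is a cover-inclusive Dyck tiling of the skew shape `lam/mu` (in
particular `mu` lies weakly above `lam`, so that `lam/mu` is defined). -/
def IsDyckTiling (lam mu : List Bool) (T : Set (Set (ℤ × ℤ))) : Prop :=
  (∀ c : ℤ, pathX mu 0 c ≤ pathX lam 0 c) ∧
  (∀ η ∈ T, IsDyckTile η) ∧
  T.PairwiseDisjoint id ∧
  (⋃ η ∈ T, η) = skewCells lam mu ∧
  IsCoverInclusive T

/-- the number of tiles `|T|` of a tiling -/
noncomputable def ntiles (T : Set (Set (ℤ × ℤ))) : ℕ := T.ncard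

/-- the half-length of a Dyck tile (a Dyck tile of length `2k` has `2k+1`
cells) -/
noncomputable def halfLen (s : Set (ℤ × ℤ)) : ℕ := s.ncard / 2

/-- `‖T‖`: the sum of the half-lengths of the tiles of `T` -/
noncomputable def normT (T : Set (Set (ℤ × ℤ))) : ℕ := ∑ᶠ η ∈ T, halfLen η

/-! ### Triangles, regions `λ/μ`, and truncated Dyck tilings

The unit cell `(x,y)` is cut by its diagonal of slope `-1` into a southwest
half-cell, the triangle `(x, y, false)`, and a northeast half-cell, the
triangle `(x, y, true)`. -/

/-- Membership of a triangle in the region `lam/mu`, where `lam` is a Dyck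
path of semilength `n` from `(0,0)` to `(n,n)` and `mu` is a lattice path
starting at `(-a, a)` lying weakly above `lam`; the region is bounded by
`lam`, `mu` and the two segments of slope `-1` joining `(0,0)` to `(-a,a)` and
`(n,n)` to the endpoint of `mu`. -/
def TriInRegion (n : ℕ) (lam mu : List Bool) (a : ℤ) (t : ℤ × ℤ × Bool) : Prop :=
  pathX mu (-a) (t.1 + t.2.1 + 1) ≤ t.1 ∧
  t.1 + 1 ≤ pathX lam 0 (t.1 + t.2.1 + 1) ∧
  (if t.2.2 then 0 ≤ t.1 + t.2.1 + 1 ∧ t.1 + t.2.1 + 2 ≤ 2 * (n : ℤ)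
   else 0 ≤ t.1 + t.2.1 ∧ t.1 + t.2.1 + 1 ≤ 2 * (n : ℤ))

/-- `L(λ; a, b)`: the lattice paths of up and down steps from `(-a, a)` to
`(n-b, n+b)` that never go below `lam` -/
def LSet (n : ℕ) (lam : List Bool) (a b : ℤ) : Set (List Bool) :=
  {w | w.length = 2 * n ∧ (w.count false : ℤ) = (n : ℤ) - b + a ∧
    ∀ c : ℤ, 0 ≤ c → c ≤ 2 * n → pathX w (-a) c ≤ pathX lam 0 c}

/-- twice the area `|λ/μ|` of the region `lam/mu` (i.e. the number of
triangles contained in it) -/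
def area2 (n : ℕ) (lam mu : List Bool) (a : ℤ) : ℤ :=
  ∑ d ∈ Finset.range (2 * n),
    (pathX lam 0 (d : ℤ) - pathX mu (-a) (d : ℤ) +
      (pathX lam 0 ((d : ℤ) + 1) - pathX mu (-a) ((d : ℤ) + 1)))

/-- the last (northeast) cell of a ribbon with start cell `(x0, y0)` and step
word `u` -/
def lastCell (x0 y0 : ℤ) (u : List Bool) : ℤ × ℤ :=
  (x0 + u.count false, y0 + u.count true)

/-- A truncated Dyck tile: a Dyck tile of positive length with the southwest
half-cell of its southwest cell and the northeast half-cell of its northeast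
cell cut off. -/
def IsTruncTile (s : Set (ℤ × ℤ × Bool)) : Prop :=
  ∃ (x0 y0 : ℤ) (k : ℕ) (u : List Bool), 0 < k ∧ IsDyckWord k u ∧
    s = {t : ℤ × ℤ × Bool | (t.1, t.2.1) ∈ cellsOf u (x0, y0)} \
        {(x0, y0, false), ((lastCell x0 y0 u).1, (lastCell x0 y0 u).2, true)}

/-- southeast translation of a set of triangles by `(1, -1)` -/
def shiftTriSE (s : Set (ℤ × ℤ × Bool)) : Set (ℤ × ℤ × Bool) :=
  (fun t => (t.1 + 1, t.2.1 - 1, t.2.2)) '' s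

/-- `T` is a cover-inclusive truncated Dyck tiling of (a subregion of) the
region `lam/mu`: the tiles are disjoint truncated Dyck tiles inside the
region, every tile whose southeast translate by `(1,-1)` meets the region has
this translate contained in a tile of `T`, and no two tiles share a border of
slope `-1`. -/
def IsTruncTiling (n : ℕ) (lam mu : List Bool) (a : ℤ)
    (T : Set (Set (ℤ × ℤ × Bool))) : Prop :=
  (∀ η ∈ T, IsTruncTile η) ∧
  T.PairwiseDisjoint id ∧
  (∀ η ∈ T, ∀ t ∈ η, TriInRegion n lam mu a t) ∧
  (∀ η ∈ T, (∃ t ∈ shiftTriSE η, TriInRegion n lam mu a t) →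
      ∃ η' ∈ T, shiftTriSE η ⊆ η') ∧
  (∀ η₁ ∈ T, ∀ η₂ ∈ T, η₁ ≠ η₂ →
      ∀ x y : ℤ, ¬((x, y, false) ∈ η₁ ∧ (x, y, true) ∈ η₂))

/-- the half-length of a truncated Dyck tile (a truncated Dyck tile of
half-length `k` consists of `4k` triangles) -/
noncomputable def halfLenT (s : Set (ℤ × ℤ × Bool)) : ℕ := s.ncard / 4

/-- `‖T‖` for truncated tilings: the sum of the half-lengths of the tiles -/
noncomputable def normTT (T : Set (Set (ℤ × ℤ × Bool))) : ℕ := ∑ᶠ η ∈ T, halfLenT η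

/-- `B_q(λ; a, b) = Σ_{μ ∈ L(λ;a,b)} Σ_{T ∈ TD(λ/μ)} q^{|λ/μ| - ‖T‖}`, a
polynomial in `q^{1/2}`, expressed in the variable `v = q^{1/2}` (so `q = v²`
and `q^{|λ/μ| - ‖T‖} = v^{2|λ/μ| - 2‖T‖}`). -/
noncomputable def B (v : RatFunc ℚ) (n : ℕ) (lam : List Bool) (a b : ℤ) : RatFunc ℚ :=
  ∑ᶠ mu ∈ LSet n lam a b, ∑ᶠ T ∈ {T | IsTruncTiling n lam mu a T},
    v ^ (area2 n lam mu a - 2 * (normTT T : ℤ))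

/-! ### Hermite histories and matchings -/

/-- A Hermite history on the Dyck path `mu` of length `2n`: a labeling of the
down steps of `mu` such that a down step of height `h` gets a label in
`{0, 1, …, h-1}` (encoded as a function on `ℕ` vanishing off the down steps). -/
def HHSet (n : ℕ) (mu : List Bool) : Set (ℕ → ℕ) :=
  {σ | (∀ j, j < 2 * n → mu.getD j true = false → σ j < (heightAt mu j).toNat) ∧
       ∀ j, ¬(j < 2 * n ∧ mu.getD j true = false) → σ j = 0}

/-- `‖H‖`: the sum of the labels of a Hermite history -/
def normH (n : ℕ) (σ : ℕ → ℕ) : ℕ := ∑ j ∈ Finset.range (2 * n), σ j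

/-- a complete matching on `{0, 1, …, 2n-1}` -/
def IsMatching (n : ℕ) (π : Set (ℕ × ℕ)) : Prop :=
  (∀ p ∈ π, p.1 < p.2 ∧ p.2 < 2 * n) ∧
  ∀ m, m < 2 * n → ∃! p, p ∈ π ∧ (p.1 = m ∨ p.2 = m)

/-- `M(μ)`: the complete matchings whose shape is the Dyck path `mu` (the
`i`-th step of `mu` is an up step iff `i` is the smaller element of its pair) -/
def MSet (n : ℕ) (mu : List Bool) : Set (Set (ℕ × ℕ)) :=
  {π | IsMatching n π ∧ ∀ i, i < 2 * n → (mu.getD i false = true ↔ ∃ p ∈ π, p.1 = i)}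

/-- the number of crossings of a matching -/
noncomputable def cro (π : Set (ℕ × ℕ)) : ℕ :=
  {pq : (ℕ × ℕ) × (ℕ × ℕ) | pq.1 ∈ π ∧ pq.2 ∈ π ∧
    pq.1.1 < pq.2.1 ∧ pq.2.1 < pq.1.2 ∧ pq.1.2 < pq.2.2}.ncard

/-- the number of nestings of a matching -/
noncomputable def nest (π : Set (ℕ × ℕ)) : ℕ :=
  {pq : (ℕ × ℕ) × (ℕ × ℕ) | pq.1 ∈ π ∧ pq.2 ∈ π ∧
    pq.1.1 < pq.2.1 ∧ pq.2.2 < pq.1.2}.ncard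

/-- `D(*/μ)`: cover-inclusive Dyck tilings of `λ/μ` over all Dyck paths `λ`
of length `2n` (for fixed `mu`, a tiling determines `lam`) -/
def DstarSet (n : ℕ) (mu : List Bool) : Set (Set (Set (ℤ × ℤ))) :=
  {T | ∃ lam, IsDyckWord n lam ∧ IsDyckTiling lam mu T}

/-- `D(2n)`: the disjoint union of the sets `D(ν/ρ)` over all pairs of Dyck
paths `ν, ρ` of length `2n`, realized as the set of triples `(ν, ρ, T)` -/
def DDSet (n : ℕ) : Set (List Bool × List Bool × Set (Set (ℤ × ℤ))) :=
  {x | IsDyckWord n x.1 ∧ IsDyckWord n x.2.1 ∧ IsDyckTiling x.1 x.2.1 x.2.2}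

/-!
The factorial identity
`[n choose n1+i-j] [n1+i choose n1] [n2+j choose n2]
  = [n choose n1] [n1+i choose j] [n2+j choose i]`
and the expansion (by induction on `n2`, `i`, `j` through q-Pascal)
`[n1+i choose j] [n2+j choose i]
  = Σ_k q^{(i-k)(j-k)} [n+k choose k] [n2 choose i-k] [n1 choose j-k]`
turn the `(i, j)` term of the left side into
`[n choose n1] Σ_k F(i,k) G(j,k) q^{k²} [n+k choose k]`, where
`F(i,k) = q^{(n1-a)i+i²-ki} [n1 choose a-i] [n2 choose i-k]` and `G` is `F` for `(n2, b, n1)`.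
Summing over `i` and `j` first, q-Vandermonde gives `Σ_i F(i,k) = q^{(n1-a)k} [n choose a-k]` and
`Σ_j G(j,k) = q^{(n2-b)k} [n choose b-k]`.
-/

open Finset

theorem qint_add {R : Type*} [CommRing R] (q : R) (u v : ℕ) :
    qint q (u + v) = qint q u + q ^ u * qint q v := by
  simp only [qint, sum_range_add, mul_sum, pow_add]

theorem qfact_succ {R : Type*} [CommRing R] (q : R) (m : ℕ) :
    qfact q (m + 1) = qfact q m * qint q (m + 1) :=
  prod_range_succ _ _

theorem qfact_zero {R : Type*} [CommRing R] (q : R) : qfact q 0 = 1 :=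
  prod_range_zero _

section QBinomial

variable {K : Type*} [Field K] {q : K}

theorem qint_succ_ne_zero (hq : ∀ m, qfact q m ≠ 0) (m : ℕ) : qint q (m + 1) ≠ 0 :=
  right_ne_zero_of_mul (qfact_succ q m ▸ hq (m + 1))

theorem qbinom_eq_zero_of_not_mem (m : ℕ) {c : ℤ} (h : ¬(0 ≤ c ∧ c ≤ m)) : qbinom q m c = 0 :=
  if_neg h

theorem qbinom_of_neg (m : ℕ) {c : ℤ} (h : c < 0) : qbinom q m c = 0 :=
  qbinom_eq_zero_of_not_mem m (by omega)

theorem qbinom_of_gt {m : ℕ} {c : ℤ} (h : (m : ℤ) < c) : qbinom q m c = 0 :=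
  qbinom_eq_zero_of_not_mem m (by omega)

theorem qbinom_add_natCast (u v : ℕ) :
    qbinom q (u + v) u = qfact q (u + v) / (qfact q u * qfact q v) := by
  rw [qbinom, if_pos ⟨u.cast_nonneg, by omega⟩]
  simp

theorem qbinom_zero_left (j : ℤ) : qbinom q 0 j = if j = 0 then 1 else 0 := by
  split_ifs with h
  · simp [qbinom, h, qfact_zero]
  · exact if_neg fun hj => h (by omega)

theorem qbinom_zero_right (hq : ∀ m, qfact q m ≠ 0) (m : ℕ) : qbinom q m 0 = 1 := by
  simpa [qfact_zero, div_self (hq m)] using qbinom_add_natCast (q := q) 0 m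

theorem qbinom_self (hq : ∀ m, qfact q m ≠ 0) (m : ℕ) : qbinom q m m = 1 := by
  simpa [qfact_zero, div_self (hq m)] using qbinom_add_natCast (q := q) m 0

theorem qbinom_add_succ_succ (hq : ∀ m, qfact q m ≠ 0) (k r : ℕ) :
    qbinom q (k + 1 + r + 1) (k + 1 : ℕ) =
      qbinom q (k + 1 + r) (k + 1 : ℕ) + q ^ (r + 1) * qbinom q (k + 1 + r) k := by
  have hk := qbinom_add_natCast (q := q) k (r + 1)
  rw [show k + (r + 1) = k + 1 + r by ring] at hk
  rw [hk, show k + 1 + r + 1 = k + 1 + (r + 1) by ring, qbinom_add_natCast, qbinom_add_natCast,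
    show k + 1 + (r + 1) = k + 1 + r + 1 by ring, qfact_succ q (k + 1 + r), qfact_succ q k,
    qfact_succ q r, show k + 1 + r + 1 = r + 1 + (k + 1) by ring, qint_add]
  have := hq k; have := hq r; have := hq (k + 1 + r)
  have := qint_succ_ne_zero hq k; have := qint_succ_ne_zero hq r
  field_simp

theorem qbinom_succ (hq : ∀ m, qfact q m ≠ 0) (m : ℕ) (j : ℤ) :
    qbinom q (m + 1) j = qbinom q m j + q ^ ((m : ℤ) + 1 - j) * qbinom q m (j - 1) := by
  rcases lt_or_ge j 0 with hj | hj
  · rw [qbinom_of_neg _ hj, qbinom_of_neg _ hj, qbinom_of_neg _ (by omega), mul_zero, add_zero]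
  obtain ⟨j, rfl⟩ := Int.eq_ofNat_of_zero_le hj
  rcases j with _ | k
  · rw [Nat.cast_zero, qbinom_zero_right hq, qbinom_zero_right hq, qbinom_of_neg m (by omega),
      mul_zero, add_zero]
  rcases lt_trichotomy (k + 1) (m + 1) with hlt | heq | hgt
  · obtain ⟨r, rfl⟩ : ∃ r, m = k + 1 + r := ⟨m - k - 1, by omega⟩
    rw [qbinom_add_succ_succ hq, show ((k + 1 + r : ℕ) : ℤ) + 1 - (k + 1 : ℕ) = (r + 1 : ℕ) by push_cast; ring,
      zpow_natCast, show ((k + 1 : ℕ) : ℤ) - 1 = k by push_cast; ring]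
  · obtain rfl : k = m := by omega
    rw [qbinom_self hq, qbinom_of_gt (by push_cast; omega), Nat.cast_succ, add_sub_cancel_right,
      qbinom_self hq, sub_self, zpow_zero, one_mul, zero_add]
  · rw [qbinom_of_gt (by push_cast; omega), qbinom_of_gt (by push_cast; omega),
      qbinom_of_gt (by push_cast; omega), mul_zero, add_zero]

theorem qbinom_add_eq_sum (hq0 : q ≠ 0) (hq : ∀ m, qfact q m ≠ 0) (m1 m2 : ℕ) (c : ℤ) :
    qbinom q (m1 + m2) c = ∑ s ∈ range (m1 + 1),
      q ^ (((m1 : ℤ) - s) * (c - s)) * qbinom q m1 s * qbinom q m2 (c - s) := by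
  induction m2 generalizing c with
  | zero =>
    simp only [qbinom_zero_left, sub_eq_zero, mul_ite, mul_one, mul_zero, add_zero]
    by_cases hc : 0 ≤ c ∧ c ≤ m1
    · obtain ⟨s, rfl⟩ := Int.eq_ofNat_of_zero_le hc.1
      rw [sum_eq_single_of_mem s (mem_range.2 (by omega)) fun t _ hts => if_neg (by omega),
        if_pos rfl, sub_self, mul_zero, zpow_zero, one_mul]
    · rw [qbinom_eq_zero_of_not_mem m1 hc]
      refine (sum_eq_zero fun s hs => if_neg ?_).symm
      have := mem_range.1 hs
      omega
  | succ m2 ih =>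
    rw [← add_assoc, qbinom_succ hq, ih, ih, mul_sum, ← sum_add_distrib]
    refine sum_congr rfl fun s _ => ?_
    rw [qbinom_succ hq m2, sub_sub, add_comm 1 (s : ℤ), ← sub_sub, mul_add]
    congr 1
    have hexp : q ^ (((m1 : ℤ) - s) * (c - s - 1)) * q ^ (((m1 + m2 : ℕ) : ℤ) + 1 - c) =
        q ^ (((m1 : ℤ) - s) * (c - s)) * q ^ ((m2 : ℤ) + 1 - (c - s)) := by
      rw [← zpow_add₀ hq0, ← zpow_add₀ hq0]
      push_cast
      ring_nf
    linear_combination qbinom q m1 s * qbinom q m2 (c - s - 1) * hexp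

/-- q-Vandermonde after the substitution `s = c - i`. -/
theorem sum_qbinom_sub_mul_qbinom_sub (hq0 : q ≠ 0) (hq : ∀ m, qfact q m ≠ 0)
    (m1 m2 c k : ℕ) :
    ∑ i ∈ range (c + 1), q ^ (((m1 : ℤ) - c) * i + (i : ℤ) ^ 2 - (k : ℤ) * i) *
        qbinom q m1 ((c : ℤ) - i) * qbinom q m2 ((i : ℤ) - k) =
      q ^ (((m1 : ℤ) - c) * k) * qbinom q (m1 + m2) ((c : ℤ) - k) := by
  rw [← sum_range_reflect, qbinom_add_eq_sum hq0 hq, mul_sum]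
  have hreflect : ∀ s ∈ range (c + 1),
      q ^ (((m1 : ℤ) - c) * ((c + 1 - 1 - s : ℕ) : ℤ) + ((c + 1 - 1 - s : ℕ) : ℤ) ^ 2 -
          (k : ℤ) * ((c + 1 - 1 - s : ℕ) : ℤ)) *
        qbinom q m1 ((c : ℤ) - ((c + 1 - 1 - s : ℕ) : ℤ)) *
        qbinom q m2 (((c + 1 - 1 - s : ℕ) : ℤ) - k) =
      q ^ (((m1 : ℤ) - c) * k) * (q ^ (((m1 : ℤ) - s) * ((c : ℤ) - k - s)) *
        qbinom q m1 s * qbinom q m2 ((c : ℤ) - k - s)) := by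
    intro s hs
    rw [Nat.add_sub_cancel, Nat.cast_sub (by simpa [Nat.lt_succ_iff] using hs),
      ← mul_assoc, ← mul_assoc, ← zpow_add₀ hq0]
    ring_nf
  rw [sum_congr rfl hreflect]
  rcases le_total c m1 with hcm | hmc
  · refine sum_subset (range_subset_range.2 (by omega)) fun s hs hsc => ?_
    rw [qbinom_of_neg m2 (by simp at hs hsc; omega), mul_zero, mul_zero]
  · refine (sum_subset (range_subset_range.2 (by omega)) fun s hs hsm => ?_).symm
    rw [qbinom_of_gt (m := m1) (by simp at hs hsm; omega), mul_zero, zero_mul, mul_zero]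

/-- With `m = n1 + n2` this expands `[n1+i choose j]_q [n2+j choose i]_q` (`qbinomConv_eq`); the
top index `m` is kept free so that the q-Pascal recurrences in `m` and `n2` stay in the family. -/
noncomputable def qbinomConv (q : K) (m n1 n2 i j : ℕ) : K :=
  ∑ k ∈ range (i + 1), q ^ (((i : ℤ) - k) * ((j : ℤ) - k)) * qbinom q (m + k) k *
    qbinom q n2 ((i : ℤ) - k) * qbinom q n1 ((j : ℤ) - k)

theorem qbinomConv_top_succ (hq : ∀ m, qfact q m ≠ 0) (m n1 n2 i j : ℕ) :
    qbinomConv q (m + 1) n1 n2 (i + 1) (j + 1) =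
      qbinomConv q m n1 n2 (i + 1) (j + 1) +
        q ^ ((m : ℤ) + 1) * qbinomConv q (m + 1) n1 n2 i j := by
  have hpascal : ∀ k : ℕ, qbinom q (m + 1 + k) k =
      qbinom q (m + k) k + q ^ ((m : ℤ) + 1) * qbinom q (m + k) ((k : ℤ) - 1) := by
    intro k
    rw [show m + 1 + k = m + k + 1 by ring, qbinom_succ hq]
    push_cast
    ring_nf
  rw [qbinomConv]
  simp only [hpascal, mul_add, add_mul, sum_add_distrib]
  congr 1
  rw [sum_range_succ', qbinomConv, mul_sum]
  simp only [Nat.cast_zero, zero_sub, qbinom_of_neg _ (show (-1 : ℤ) < 0 by norm_num),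
    mul_zero, zero_mul, add_zero]
  refine sum_congr rfl fun k _ => ?_
  push_cast
  ring_nf

theorem qbinomConv_n2_succ (hq0 : q ≠ 0) (hq : ∀ m, qfact q m ≠ 0) (m n1 n2 i j : ℕ) :
    qbinomConv q m n1 (n2 + 1) (i + 1) j =
      qbinomConv q m n1 n2 (i + 1) j + q ^ ((n2 : ℤ) + j - i) * qbinomConv q m n1 n2 i j := by
  have hpascal : ∀ k : ℕ, qbinom q (n2 + 1) (((i + 1 : ℕ) : ℤ) - k) =
      qbinom q n2 (((i + 1 : ℕ) : ℤ) - k) +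
        q ^ ((n2 : ℤ) + 1 - (((i + 1 : ℕ) : ℤ) - k)) * qbinom q n2 ((i : ℤ) - k) := by
    intro k
    rw [qbinom_succ hq]
    push_cast
    ring_nf
  rw [qbinomConv]
  simp only [hpascal, mul_add, add_mul, sum_add_distrib]
  congr 1
  rw [sum_range_succ, qbinomConv, mul_sum]
  simp only [qbinom_of_neg n2 (show (i : ℤ) - ((i + 1 : ℕ) : ℤ) < 0 by omega),
    mul_zero, zero_mul, add_zero]
  refine sum_congr rfl fun k _ => ?_
  have hexp : q ^ ((((i + 1 : ℕ) : ℤ) - k) * ((j : ℤ) - k)) *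
        q ^ ((n2 : ℤ) + 1 - (((i + 1 : ℕ) : ℤ) - k)) =
      q ^ ((n2 : ℤ) + j - i) * q ^ (((i : ℤ) - k) * ((j : ℤ) - k)) := by
    rw [← zpow_add₀ hq0, ← zpow_add₀ hq0]
    push_cast
    ring_nf
  linear_combination qbinom q (m + k) k * qbinom q n2 ((i : ℤ) - k) *
    qbinom q n1 ((j : ℤ) - k) * hexp

theorem qbinomConv_i_zero (hq : ∀ m, qfact q m ≠ 0) (m n1 n2 j : ℕ) :
    qbinomConv q m n1 n2 0 j = qbinom q n1 j := by
  simp [qbinomConv, qbinom_zero_right hq]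

theorem qbinomConv_j_zero (hq : ∀ m, qfact q m ≠ 0) (m n1 n2 i : ℕ) :
    qbinomConv q m n1 n2 i 0 = qbinom q n2 i := by
  rw [qbinomConv, sum_eq_single_of_mem 0 (by simp) fun k _ hk => by
    rw [qbinom_of_neg n1 (by omega), mul_zero]]
  simp [qbinom_zero_right hq]

theorem qbinomConv_n2_zero (m n1 i j : ℕ) :
    qbinomConv q m n1 0 i j = qbinom q (m + i) i * qbinom q n1 ((j : ℤ) - i) := by
  rw [qbinomConv, sum_eq_single_of_mem i (by simp) fun k _ hk => by
    rw [qbinom_zero_left, if_neg (by omega), mul_zero, zero_mul]]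
  simp [qbinom_zero_left]

theorem qbinom_add_mul_qbinom_sub (hq : ∀ m, qfact q m ≠ 0) (n1 i j : ℕ) :
    qbinom q (n1 + i) i * qbinom q n1 ((j : ℤ) - i) = qbinom q (n1 + i) j * qbinom q j i := by
  by_cases hij : i ≤ j ∧ j ≤ n1 + i
  · obtain ⟨e, rfl⟩ : ∃ e, j = i + e := ⟨j - i, by omega⟩
    obtain ⟨f, rfl⟩ : ∃ f, n1 = e + f := ⟨n1 - e, by omega⟩
    rw [show e + f + i = i + (e + f) by ring, qbinom_add_natCast,
      show ((i + e : ℕ) : ℤ) - i = e by push_cast; ring, qbinom_add_natCast,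
      show i + (e + f) = i + e + f by ring, qbinom_add_natCast, qbinom_add_natCast]
    have := hq i; have := hq e; have := hq f; have := hq (i + e); have := hq (e + f)
    field_simp
  · rw [qbinom_eq_zero_of_not_mem n1 (by omega), mul_zero, eq_comm, mul_eq_zero]
    rcases not_and_or.1 hij with hij | hij
    · exact .inr (qbinom_eq_zero_of_not_mem j (by omega))
    · exact .inl (qbinom_eq_zero_of_not_mem (n1 + i) (by omega))

theorem qbinomConv_eq (hq0 : q ≠ 0) (hq : ∀ m, qfact q m ≠ 0) (n1 n2 i j : ℕ) :
    qbinomConv q (n1 + n2) n1 n2 i j = qbinom q (n1 + i) j * qbinom q (n2 + j) i := by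
  induction n2 generalizing i j with
  | zero =>
    rw [add_zero, qbinomConv_n2_zero, qbinom_add_mul_qbinom_sub hq, zero_add]
  | succ n2 ih =>
    induction i generalizing j with
    | zero => rw [qbinomConv_i_zero hq, Nat.cast_zero, qbinom_zero_right hq, mul_one, add_zero]
    | succ i ihi =>
      rcases j with _ | j
      · rw [qbinomConv_j_zero hq, Nat.cast_zero, qbinom_zero_right hq, one_mul, add_zero]
      have hpascal1 : qbinom q (n1 + (i + 1)) (j + 1 : ℕ) = qbinom q (n1 + i) (j + 1 : ℕ) +
          q ^ ((n1 : ℤ) + i - j) * qbinom q (n1 + i) j := by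
        rw [← add_assoc, qbinom_succ hq]
        push_cast
        ring_nf
      have hpascal2 : qbinom q (n2 + 1 + (j + 1)) (i + 1 : ℕ) =
          qbinom q (n2 + (j + 1)) (i + 1 : ℕ) +
            q ^ ((n2 : ℤ) + (j + 1 : ℕ) - i) * qbinom q (n2 + (j + 1)) i := by
        rw [show n2 + 1 + (j + 1) = n2 + (j + 1) + 1 by ring, qbinom_succ hq]
        push_cast
        ring_nf
      have hexp : q ^ ((n1 + n2 : ℕ) + 1 : ℤ) =
          q ^ ((n2 : ℤ) + (j + 1 : ℕ) - i) * q ^ ((n1 : ℤ) + i - j) := by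
        rw [← zpow_add₀ hq0]
        push_cast
        ring_nf
      rw [← add_assoc, qbinomConv_top_succ hq, qbinomConv_n2_succ hq0 hq, ih, ih,
        show n1 + n2 + 1 = n1 + (n2 + 1) from rfl, ihi, show n2 + 1 + j = n2 + (j + 1) by ring]
      linear_combination (-qbinom q (n1 + (i + 1)) (j + 1 : ℕ)) * hpascal2 -
        q ^ ((n2 : ℤ) + (j + 1 : ℕ) - i) * qbinom q (n2 + (j + 1)) i * hpascal1 +
        qbinom q (n1 + i) j * qbinom q (n2 + (j + 1)) i * hexp

theorem qbinom_sub_mul_qbinom_mul_qbinom (hq : ∀ m, qfact q m ≠ 0) (n1 n2 i j : ℕ) :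
    qbinom q (n1 + n2) ((n1 : ℤ) + i - j) * qbinom q (n1 + i) n1 * qbinom q (n2 + j) n2 =
      qbinom q (n1 + n2) n1 * (qbinom q (n1 + i) j * qbinom q (n2 + j) i) := by
  by_cases hij : j ≤ n1 + i ∧ i ≤ n2 + j
  · obtain ⟨d1, hd1⟩ : ∃ d1, n1 + i = j + d1 := ⟨n1 + i - j, by omega⟩
    obtain ⟨d2, hd2⟩ : ∃ d2, n2 + j = i + d2 := ⟨n2 + j - i, by omega⟩
    have hd : n1 + n2 = d1 + d2 := by omega
    rw [show (n1 : ℤ) + i - j = d1 by omega, hd, qbinom_add_natCast, ← hd, qbinom_add_natCast,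
      qbinom_add_natCast, qbinom_add_natCast, hd1, qbinom_add_natCast, hd2, qbinom_add_natCast,
      ← hd1, ← hd2]
    have := hq d1; have := hq d2; have := hq i; have := hq j; have := hq n1; have := hq n2
    field_simp
  · rcases not_and_or.1 hij with hij | hij
    · rw [qbinom_eq_zero_of_not_mem (n1 + n2) (by omega),
        qbinom_eq_zero_of_not_mem (n1 + i) (c := j) (by omega)]
      ring
    · rw [qbinom_eq_zero_of_not_mem (n1 + n2) (by omega),
        qbinom_eq_zero_of_not_mem (n2 + j) (c := i) (by omega)]
      ring

theorem hypergeometric_term_eq_sum (hq0 : q ≠ 0) (hq : ∀ m, qfact q m ≠ 0)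
    {n1 n2 a b i : ℕ} (j : ℕ) (hi : i ≤ a) :
    q ^ (((n1 : ℤ) - a) * i + ((n2 : ℤ) - b) * j - (i : ℤ) * j + (i : ℤ) ^ 2 + (j : ℤ) ^ 2) *
        (qbinom q n1 ((a : ℤ) - i) * qbinom q n2 ((b : ℤ) - j) *
          qbinom q (n1 + n2) ((n1 : ℤ) + i - j) * qbinom q (n1 + i) n1 * qbinom q (n2 + j) n2) =
      qbinom q (n1 + n2) n1 * ∑ k ∈ range (a + 1),
        q ^ (((n1 : ℤ) - a) * i + (i : ℤ) ^ 2 - (k : ℤ) * i) *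
            qbinom q n1 ((a : ℤ) - i) * qbinom q n2 ((i : ℤ) - k) *
          (q ^ (((n2 : ℤ) - b) * j + (j : ℤ) ^ 2 - (k : ℤ) * j) *
            qbinom q n2 ((b : ℤ) - j) * qbinom q n1 ((j : ℤ) - k)) *
          (q ^ ((k : ℤ) ^ 2) * qbinom q (n1 + n2 + k) k) := by
  have hconv : qbinom q (n1 + i) j * qbinom q (n2 + j) i = ∑ k ∈ range (a + 1),
      q ^ (((i : ℤ) - k) * ((j : ℤ) - k)) * qbinom q (n1 + n2 + k) k *
        qbinom q n2 ((i : ℤ) - k) * qbinom q n1 ((j : ℤ) - k) := by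
    rw [← qbinomConv_eq hq0 hq, qbinomConv]
    exact sum_subset (range_subset_range.2 (by omega)) fun k hk hki => by
      rw [qbinom_of_neg n2 (by simp at hk hki; omega), mul_zero, zero_mul]
  rw [show ∀ x y z u v w : K, x * (y * z * u * v * w) = x * (y * z) * (u * v * w) by
      intros; ring, qbinom_sub_mul_qbinom_mul_qbinom hq, hconv, mul_left_comm, mul_sum]
  congr 1
  refine sum_congr rfl fun k _ => ?_
  have hexp : q ^ (((n1 : ℤ) - a) * i + ((n2 : ℤ) - b) * j - (i : ℤ) * j + (i : ℤ) ^ 2 +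
        (j : ℤ) ^ 2) * q ^ (((i : ℤ) - k) * ((j : ℤ) - k)) =
      q ^ (((n1 : ℤ) - a) * i + (i : ℤ) ^ 2 - (k : ℤ) * i) *
        q ^ (((n2 : ℤ) - b) * j + (j : ℤ) ^ 2 - (k : ℤ) * j) * q ^ ((k : ℤ) ^ 2) := by
    simp only [← zpow_add₀ hq0]
    ring_nf
  linear_combination qbinom q n1 ((a : ℤ) - i) * qbinom q n2 ((b : ℤ) - j) *
    qbinom q (n1 + n2 + k) k * qbinom q n2 ((i : ℤ) - k) * qbinom q n1 ((j : ℤ) - k) * hexp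

theorem sum_sum_hypergeometric (hq0 : q ≠ 0) (hq : ∀ m, qfact q m ≠ 0) (n1 n2 a b : ℕ) :
    ∑ i ∈ range (a + 1), ∑ j ∈ range (b + 1),
      q ^ (((n1 : ℤ) - a) * i + ((n2 : ℤ) - b) * j - (i : ℤ) * j + (i : ℤ) ^ 2 + (j : ℤ) ^ 2) *
        (qbinom q n1 ((a : ℤ) - i) * qbinom q n2 ((b : ℤ) - j) *
          qbinom q (n1 + n2) ((n1 : ℤ) + i - j) * qbinom q (n1 + i) n1 * qbinom q (n2 + j) n2) =
      qbinom q (n1 + n2) n1 * ∑ k ∈ range (a + 1),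
        q ^ (((n1 : ℤ) + n2 - a - b) * k + (k : ℤ) ^ 2) *
          (qbinom q (n1 + n2 + k) k * qbinom q (n1 + n2) ((a : ℤ) - k) *
            qbinom q (n1 + n2) ((b : ℤ) - k)) := by
  rw [sum_congr rfl fun i hi => sum_congr rfl fun j _ =>
    hypergeometric_term_eq_sum hq0 hq j (Nat.lt_succ_iff.1 (mem_range.1 hi))]
  simp only [← mul_sum]
  rw [sum_congr rfl fun i _ => sum_comm, sum_comm]
  congr 1
  refine sum_congr rfl fun k _ => ?_
  simp only [← sum_mul, ← mul_sum]
  rw [sum_qbinom_sub_mul_qbinom_sub hq0 hq, sum_qbinom_sub_mul_qbinom_sub hq0 hq, add_comm n2 n1]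
  have hexp : q ^ (((n1 : ℤ) - a) * k) * q ^ (((n2 : ℤ) - b) * k) * q ^ ((k : ℤ) ^ 2) =
      q ^ (((n1 : ℤ) + n2 - a - b) * k + (k : ℤ) ^ 2) := by
    simp only [← zpow_add₀ hq0]
    ring_nf
  linear_combination qbinom q (n1 + n2 + k) k * qbinom q (n1 + n2) ((a : ℤ) - k) *
    qbinom q (n1 + n2) ((b : ℤ) - k) * hexp

end QBinomial

theorem qfact_X_ne_zero {F : Type*} [Field F] (m : ℕ) : qfact (RatFunc.X : RatFunc F) m ≠ 0 := by
  refine prod_ne_zero_iff.2 fun i _ => ?_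
  have hpoly : (∑ j ∈ range (i + 1), Polynomial.X ^ j : Polynomial F) ≠ 0 := fun h => by
    simpa [Polynomial.finsetSum_coeff, Polynomial.coeff_X_pow] using
      congrArg (Polynomial.coeff · 0) h
  simpa [qint, map_sum] using RatFunc.algebraMap_ne_zero hpoly

/-- **Hypergeometric identity.** For nonnegative integers `n1, n2, a, b` with
`n = n1 + n2`,
`Σ_{i,j ≥ 0} q^{(n1-a)i + (n2-b)j - ij + i² + j²}
    [n1 choose a-i]_q [n2 choose b-j]_q [n1+n2 choose n1+i-j]_q
    [n1+i choose n1]_q [n2+j choose n2]_q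
  = [n choose n1]_q Σ_{i ≥ 0} q^{(n-a-b)i + i²}
      [n+i choose i]_q [n choose a-i]_q [n choose b-i]_q`,
stated in the field of rational functions in `q = RatFunc.X`. -/
theorem q_hypergeometric_identity (n1 n2 a b : ℕ) :
    ∑ᶠ ij : ℕ × ℕ,
        (RatFunc.X : RatFunc ℚ) ^
            (((n1 : ℤ) - (a : ℤ)) * (ij.1 : ℤ) + ((n2 : ℤ) - (b : ℤ)) * (ij.2 : ℤ) -
              (ij.1 : ℤ) * (ij.2 : ℤ) + (ij.1 : ℤ) ^ 2 + (ij.2 : ℤ) ^ 2) *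
          (qbinom (RatFunc.X : RatFunc ℚ) n1 ((a : ℤ) - (ij.1 : ℤ)) *
            qbinom (RatFunc.X : RatFunc ℚ) n2 ((b : ℤ) - (ij.2 : ℤ)) *
            qbinom (RatFunc.X : RatFunc ℚ) (n1 + n2) ((n1 : ℤ) + (ij.1 : ℤ) - (ij.2 : ℤ)) *
            qbinom (RatFunc.X : RatFunc ℚ) (n1 + ij.1) ((n1 : ℤ)) *
            qbinom (RatFunc.X : RatFunc ℚ) (n2 + ij.2) ((n2 : ℤ)))
      = qbinom (RatFunc.X : RatFunc ℚ) (n1 + n2) ((n1 : ℤ)) *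
          ∑ᶠ i : ℕ,
            (RatFunc.X : RatFunc ℚ) ^
                (((n1 : ℤ) + (n2 : ℤ) - (a : ℤ) - (b : ℤ)) * (i : ℤ) + (i : ℤ) ^ 2) *
              (qbinom (RatFunc.X : RatFunc ℚ) (n1 + n2 + i) ((i : ℤ)) *
                qbinom (RatFunc.X : RatFunc ℚ) (n1 + n2) ((a : ℤ) - (i : ℤ)) *
                qbinom (RatFunc.X : RatFunc ℚ) (n1 + n2) ((b : ℤ) - (i : ℤ))) := by
  rw [finsum_eq_sum_of_support_subset _ (s := range (a + 1) ×ˢ range (b + 1)) ?_, sum_product,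
    finsum_eq_sum_of_support_subset _ (s := range (a + 1)) ?_]
  · exact sum_sum_hypergeometric RatFunc.X_ne_zero (qfact_X_ne_zero (F := ℚ)) n1 n2 a b
  · refine Function.support_subset_iff'.2 fun i hi => ?_
    rw [qbinom_of_neg (n1 + n2) (by simp at hi; omega)]
    ring
  · refine Function.support_subset_iff'.2 fun ij hij => ?_
    rcases not_and_or.1 (mt mem_product.2 hij) with hi | hj
    · rw [qbinom_of_neg n1 (by simp at hi; omega)]
      ring
    · rw [qbinom_of_neg n2 (by simp at hj; omega)]
      ring

end DyckTilings
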